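/- Let G be a group and let K, H ≤ G be finite subgroups. Then the set of N_G(K)-orbits of the K-fixed point set (G/H)^K is finite, and the following identity of rational numbers holds: Σ (over the N_G(K)-orbits of (G/H)^K, choosing a representative gH in each orbit) of |K| / |gHg^{-1} ∩ N_G(K)| = (|K|/|H|) · |{L : L is a subgroup of G with L ⊆ H and L conjugate to K in G}|. (This computes the value of the L²-character map of the covariant Burnside group at (K) on the class [G/H]: it equals Σ_{(L) ∈ 𝓛_K(H)} |K|/|H ∩ N_G(L)|, where 𝓛_K(H) is the set of H-conjugacy classes of subgroups of H that are conjugate to K in G; the right-hand side above is an equivalent reformulation since each such class contains [H : H ∩ N_G(L)] subgroups.) -/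

import Mathlib

open MulAction

namespace L2CharAux
variable {G : Type*} [Group G]

instance conjMulAction : MulAction G (Subgroup G) where
  smul g L := L.map (MulAut.conj g).toMonoidHom
  one_smul L := by
    show L.map _ = L
    ext x; simp [Subgroup.mem_map]
  mul_smul g h L := by
    show L.map _ = (L.map _).map _
    ext x; simp [Subgroup.mem_map, mul_assoc]

lemma smul_def (g : G) (L : Subgroup G) : g • L = L.map (MulAut.conj g).toMonoidHom := rfl

lemma mem_smul_iff {g a : G} {L : Subgroup G} : a ∈ g • L ↔ g⁻¹ * a * g ∈ L := by
  show a ∈ L.map _ ↔ _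
  simp only [Subgroup.mem_map, MulEquiv.coe_toMonoidHom, MulAut.conj_apply]
  constructor
  · rintro ⟨y, hy, rfl⟩
    have e : g⁻¹ * (g * y * g⁻¹) * g = y := by group
    rwa [e]
  · intro h; exact ⟨g⁻¹ * a * g, h, by group⟩

lemma smul_normalizer_iff {g : G} {K : Subgroup G} : g • K = K ↔ g ∈ (Subgroup.normalizer (K : Set G)) := by
  constructor
  · intro h
    rw [Subgroup.mem_normalizer_iff]
    intro n
    constructor
    · intro hn
      have : g * n * g⁻¹ ∈ g • K := by
        rw [mem_smul_iff]
        have e : g⁻¹ * (g * n * g⁻¹) * g = n := by group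
        rwa [e]
      rwa [h] at this
    · intro hn
      have h2 : g * n * g⁻¹ ∈ g • K := by rw [h]; exact hn
      have h3 := mem_smul_iff.mp h2
      have e : g⁻¹ * (g * n * g⁻¹) * g = n := by group
      rwa [e] at h3
  · intro h
    ext a
    rw [mem_smul_iff, Subgroup.mem_normalizer_iff.mp h (g⁻¹ * a * g)]
    have e : g * (g⁻¹ * a * g) * g⁻¹ = a := by group
    rw [e]

lemma smul_le {g : G} {L H : Subgroup G} (hL : L ≤ H) (hg : g ∈ H) :
    g • L ≤ H := by
  intro a ha
  rw [mem_smul_iff] at ha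
  have h2 := hL ha
  have e : g * (g⁻¹ * a * g) * g⁻¹ = a := by group
  rw [← e]
  exact H.mul_mem (H.mul_mem hg h2) (H.inv_mem hg)

lemma fixed_of_le {H K : Subgroup G} {g : G} (h : g⁻¹ • K ≤ H) :
    ∀ k ∈ K, k • ((g : G ⧸ H)) = ↑g := by
  intro k hk
  show ((k * g : G) : G ⧸ H) = ↑g
  rw [QuotientGroup.eq]
  apply h
  rw [mem_smul_iff]
  have e : (g⁻¹)⁻¹ * ((k * g)⁻¹ * g) * g⁻¹ = k⁻¹ := by group
  rw [e]; exact K.inv_mem hk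

lemma le_of_fixed {H K : Subgroup G} {g : G} (h : ∀ k ∈ K, k • ((g : G ⧸ H)) = ↑g) :
    g⁻¹ • K ≤ H := by
  intro a ha
  rw [mem_smul_iff, inv_inv] at ha
  have h3 : ((g * a * g⁻¹ * g : G) : G ⧸ H) = ↑g := h _ ha
  rw [QuotientGroup.eq] at h3
  have e : (g * a * g⁻¹ * g)⁻¹ * g = a⁻¹ := by group
  rw [e] at h3
  simpa using H.inv_mem h3

lemma fixed_smul {H K : Subgroup G} {q : G ⧸ H} (hq : ∀ k ∈ K, k • q = q)
    {n : G} (hn : n ∈ (Subgroup.normalizer (K : Set G))) : ∀ k ∈ K, k • (n • q) = n • q := by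
  intro k hk
  have hk' : n⁻¹ * k * n ∈ K := by
    have := (Subgroup.mem_normalizer_iff.mp ((Subgroup.normalizer (K : Set G)).inv_mem hn) k).mp hk
    rwa [inv_inv] at this
  calc k • n • q = (k * n) • q := smul_smul k n q
    _ = (n * (n⁻¹ * k * n)) • q := by congr 1; group
    _ = n • ((n⁻¹ * k * n) • q) := (smul_smul n _ q).symm
    _ = n • q := by rw [hq _ hk']

lemma ST_finite (H K : Subgroup G) [Finite ↥H] :
    Finite {L : Subgroup G // L ≤ H ∧ ∃ x : G, K.map (MulAut.conj x).toMonoidHom = L} := by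
  apply Finite.of_injective
    (fun L : {L : Subgroup G // L ≤ H ∧ ∃ x : G, K.map (MulAut.conj x).toMonoidHom = L} =>
      ({h : ↥H | (h : G) ∈ L.1} : Set ↥H))
  intro L₁ L₂ h
  have h' : ({h : ↥H | (h : G) ∈ L₁.1} : Set ↥H) = {h : ↥H | (h : G) ∈ L₂.1} := h
  apply Subtype.ext
  ext a
  constructor
  · intro ha
    have haH : a ∈ H := L₁.2.1 ha
    have h1 : (⟨a, haH⟩ : ↥H) ∈ {h : ↥H | (h : G) ∈ L₁.1} := ha
    rw [h'] at h1; exact h1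
  · intro ha
    have haH : a ∈ H := L₂.2.1 ha
    have h1 : (⟨a, haH⟩ : ↥H) ∈ {h : ↥H | (h : G) ∈ L₂.1} := ha
    rw [← h'] at h1; exact h1

end L2CharAux

namespace L2CharAux

/-- The set of subgroups of `H` that are conjugate in `G` to `K`. -/
def ST {G : Type*} [Group G] (H K : Subgroup G) :=
  {L : Subgroup G // L ≤ H ∧ ∃ x : G, K.map (MulAut.conj x).toMonoidHom = L}

end L2CharAux

open L2CharAux in
/-- **The `L²`-character of the covariant Burnside group on `[G/H]`.**
For finite subgroups `K, H ≤ G`, the set of `N_G(K)`-orbits of `(G/H)^K` is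
finite, and for any complete system `R` of representatives of these orbits one
has `Σ_{gH ∈ R} |K| / |gHg⁻¹ ∩ N_G(K)| = (|K|/|H|) · #{L ≤ H : L conjugate to
K in G}` (the stabilizer of `gH ∈ (G/H)^K` in `N_G(K)` being `gHg⁻¹ ∩ N_G(K)`). -/
theorem l2_character_of_coset_space
    (G : Type*) [Group G] (H K : Subgroup G) [Finite ↥H] [Finite ↥K] :
    (∃ R : Finset (G ⧸ H),
      (∀ r ∈ R, ∀ k ∈ K, k • r = r) ∧
      (∀ q : G ⧸ H, (∀ k ∈ K, k • q = q) →
        ∃! r, r ∈ R ∧ ∃ n ∈ (Subgroup.normalizer (K : Set G)), n • r = q)) ∧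
    ∀ R : Finset (G ⧸ H),
      (∀ r ∈ R, ∀ k ∈ K, k • r = r) →
      (∀ q : G ⧸ H, (∀ k ∈ K, k • q = q) →
        ∃! r, r ∈ R ∧ ∃ n ∈ (Subgroup.normalizer (K : Set G)), n • r = q) →
      ∑ q ∈ R, (Nat.card K : ℚ) / (Nat.card (MulAction.stabilizer (↥(Subgroup.normalizer (K : Set G))) q) : ℚ) =
        ((Nat.card K : ℚ) / (Nat.card H : ℚ)) *
          (Nat.card {L : Subgroup G // L ≤ H ∧
            ∃ x : G, K.map (MulAut.conj x).toMonoidHom = L} : ℚ) := by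
  classical
  haveI : Finite (ST H K) := ST_finite H K
  haveI : Fintype (ST H K) := Fintype.ofFinite _
  -- chosen conjugators
  choose xw hxw0 using fun L : ST H K => L.2.2
  have hxw : ∀ L : ST H K, xw L • K = L.1 := hxw0
  -- the canonical fixed point attached to `L`
  have hqLfix : ∀ L : ST H K, ∀ k ∈ K, k • ((((xw L)⁻¹ : G) : G ⧸ H)) = ↑((xw L)⁻¹) := by
    intro L
    apply fixed_of_le
    rw [inv_inv, hxw L]
    exact L.2.1
  constructor
  · -- existence of a system of representatives
    letI sSetoid : Setoid (G ⧸ H) := orbitRel (↥(Subgroup.normalizer (K : Set G))) (G ⧸ H)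
    refine ⟨Finset.image
      (fun L : ST H K => (Quotient.mk sSetoid (↑((xw L)⁻¹) : G ⧸ H)).out) Finset.univ, ?_, ?_⟩
    · intro r hr k hk
      rw [Finset.mem_image] at hr
      obtain ⟨L, -, hL⟩ := hr
      have hrel : r ∈ orbit (↥(Subgroup.normalizer (K : Set G))) ((↑((xw L)⁻¹) : G ⧸ H)) := by
        rw [← hL]
        have h := Quotient.mk_out (s := sSetoid) (↑((xw L)⁻¹) : G ⧸ H)
        exact h
      obtain ⟨n, hn⟩ := hrel
      rw [← hn]
      exact fixed_smul (hqLfix L) n.2 k hk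
    · intro q hq
      obtain ⟨g₀, hg₀⟩ := QuotientGroup.mk_surjective q
      have hle : g₀⁻¹ • K ≤ H := le_of_fixed (by intro k hk; rw [hg₀]; exact hq k hk)
      let LST : ST H K := ⟨g₀⁻¹ • K, hle, ⟨g₀⁻¹, rfl⟩⟩
      -- first, the orbit of the representative reaches `q`
      have hqr : ∃ n ∈ (Subgroup.normalizer (K : Set G)),
          n • (Quotient.mk sSetoid (↑((xw LST)⁻¹) : G ⧸ H)).out = q := by
        have hx : xw LST • K = g₀⁻¹ • K := hxw LST
        have hm : g₀ * xw LST ∈ (Subgroup.normalizer (K : Set G)) := by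
          rw [← smul_normalizer_iff, mul_smul, hx, smul_inv_smul]
        have hout : (Quotient.mk sSetoid (↑((xw LST)⁻¹) : G ⧸ H)).out ∈
              orbit (↥(Subgroup.normalizer (K : Set G))) ((↑((xw LST)⁻¹) : G ⧸ H)) := by
          have h := Quotient.mk_out (s := sSetoid) (↑((xw LST)⁻¹) : G ⧸ H)
          exact h
        obtain ⟨n₀, hn₀⟩ := hout
        refine ⟨(g₀ * xw LST) * (↑n₀)⁻¹,
          (Subgroup.normalizer (K : Set G)).mul_mem hm ((Subgroup.normalizer (K : Set G)).inv_mem n₀.2), ?_⟩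
        rw [← hn₀]
        show ((g₀ * xw LST) * (↑n₀)⁻¹) • ((↑n₀ : G) • (↑((xw LST)⁻¹) : G ⧸ H)) = q
        rw [smul_smul]
        have e : (g₀ * xw LST) * (↑n₀ : G)⁻¹ * ↑n₀ = g₀ * xw LST := by group
        rw [e]
        show ((g₀ * xw LST * (xw LST)⁻¹ : G) : G ⧸ H) = q
        have e2 : g₀ * xw LST * (xw LST)⁻¹ = g₀ := by group
        rw [e2, hg₀]
      refine ⟨(Quotient.mk sSetoid (↑((xw LST)⁻¹) : G ⧸ H)).out,
        ⟨Finset.mem_image.mpr ⟨LST, Finset.mem_univ _, rfl⟩, hqr⟩, ?_⟩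
      rintro r' ⟨hr', n', hn'N, hn'⟩
      rw [Finset.mem_image] at hr'
      obtain ⟨L', -, hL'⟩ := hr'
      have e1 : Quotient.mk sSetoid r' = Quotient.mk sSetoid (↑((xw L')⁻¹) : G ⧸ H) := by
        rw [← hL', Quotient.out_eq]
      have e2 : Quotient.mk sSetoid q = Quotient.mk sSetoid r' :=
        Quotient.sound (show q ∈ orbit (↥(Subgroup.normalizer (K : Set G))) r' from ⟨⟨n', hn'N⟩, hn'⟩)
      obtain ⟨m, hmN, hm⟩ := hqr
      have e3 : Quotient.mk sSetoid q =
          Quotient.mk sSetoid ((Quotient.mk sSetoid (↑((xw LST)⁻¹) : G ⧸ H)).out) :=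
        Quotient.sound (show q ∈ orbit (↥(Subgroup.normalizer (K : Set G)))
          ((Quotient.mk sSetoid (↑((xw LST)⁻¹) : G ⧸ H)).out) from ⟨⟨m, hmN⟩, hm⟩)
      have e4 : Quotient.mk sSetoid ((Quotient.mk sSetoid (↑((xw LST)⁻¹) : G ⧸ H)).out) =
          Quotient.mk sSetoid (↑((xw LST)⁻¹) : G ⧸ H) := Quotient.out_eq _
      have e5 : Quotient.mk sSetoid (↑((xw L')⁻¹) : G ⧸ H) =
          Quotient.mk sSetoid (↑((xw LST)⁻¹) : G ⧸ H) :=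
        e1.symm.trans (e2.symm.trans (e3.trans e4))
      rw [← hL']
      exact congrArg Quotient.out e5
  · -- the sum formula
    intro R hR1 hR2
    have hcex : ∀ L : ST H K,
        ∃! r, r ∈ R ∧ ∃ n ∈ (Subgroup.normalizer (K : Set G)), n • r = (↑((xw L)⁻¹) : G ⧸ H) :=
      fun L => hR2 _ (hqLfix L)
    choose c hc using hcex
    have hcR : ∀ L : ST H K, c L ∈ R := fun L => (hc L).1.1
    have hcn : ∀ L : ST H K, ∃ n ∈ (Subgroup.normalizer (K : Set G)), n • c L = (↑((xw L)⁻¹) : G ⧸ H) :=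
      fun L => (hc L).1.2
    have hcu : ∀ (L : ST H K) (r' : G ⧸ H), r' ∈ R →
        (∃ n ∈ (Subgroup.normalizer (K : Set G)), n • r' = (↑((xw L)⁻¹) : G ⧸ H)) → r' = c L :=
      fun L r' h1 h2 => (hc L).2 r' ⟨h1, h2⟩
    -- the key counting identity for each representative
    have key : ∀ r ∈ R,
        Nat.card {L : ST H K // c L = r} *
          Nat.card (MulAction.stabilizer (↥(Subgroup.normalizer (K : Set G))) r) = Nat.card ↥H := by
      intro r hr
      obtain ⟨g₀, hg₀⟩ := QuotientGroup.mk_surjective r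
      have hfix0 : ∀ k ∈ K, k • ((g₀ : G ⧸ H)) = ↑g₀ := by
        intro k hk; rw [hg₀]; exact hR1 r hr k hk
      have hL0 : g₀⁻¹ • K ≤ H := le_of_fixed hfix0
      -- fibers of `c` over `r` biject with the `H`-conjugation orbit of `g₀⁻¹ • K`
      have hmem : ∀ Lc : {L : ST H K // c L = r},
          (Lc.1 : ST H K).1 ∈ orbit (↥H) (g₀⁻¹ • K) := by
        rintro ⟨LL, hLc⟩
        obtain ⟨n, hnN, hn⟩ := hcn LL
        rw [hLc, ← hg₀] at hn
        have hn' : ((n * g₀ : G) : G ⧸ H) = ↑((xw LL)⁻¹) := hn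
        rw [QuotientGroup.eq] at hn'
        have hh : (xw LL * n * g₀)⁻¹ ∈ H := by
          have e : (xw LL * n * g₀)⁻¹ = (n * g₀)⁻¹ * (xw LL)⁻¹ := by group
          rw [e]; exact hn'
        have hhH : xw LL * n * g₀ ∈ H := by simpa using H.inv_mem hh
        rw [mem_orbit_iff]
        refine ⟨⟨xw LL * n * g₀, hhH⟩, ?_⟩
        show (xw LL * n * g₀) • (g₀⁻¹ • K) = (LL : ST H K).1
        rw [smul_smul]
        have e2 : xw LL * n * g₀ * g₀⁻¹ = xw LL * n := by group
        rw [e2, mul_smul, smul_normalizer_iff.mpr hnN, hxw LL]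
      have hbij : Function.Bijective
          (fun Lc : {L : ST H K // c L = r} =>
            (⟨(Lc.1 : ST H K).1, hmem Lc⟩ : orbit (↥H) (g₀⁻¹ • K))) := by
        constructor
        · intro a b hab
          have h9 := congrArg Subtype.val hab
          exact Subtype.ext (Subtype.ext h9)
        · rintro ⟨M, hM⟩
          rw [mem_orbit_iff] at hM
          obtain ⟨⟨h, hh⟩, hhM⟩ := hM
          have hhM' : h • (g₀⁻¹ • K) = M := hhM
          have hMle : M ≤ H := by rw [← hhM']; exact smul_le hL0 hh
          have hMconj : ∃ x : G, K.map (MulAut.conj x).toMonoidHom = M := by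
            refine ⟨h * g₀⁻¹, ?_⟩
            show (h * g₀⁻¹) • K = M
            rw [mul_smul]; exact hhM'
          have hcLM : c ⟨M, hMle, hMconj⟩ = r := by
            have hx' : xw ⟨M, hMle, hMconj⟩ • K = M := hxw ⟨M, hMle, hMconj⟩
            have hnN : (xw ⟨M, hMle, hMconj⟩)⁻¹ * (h * g₀⁻¹) ∈ (Subgroup.normalizer (K : Set G)) := by
              rw [← smul_normalizer_iff, mul_smul]
              have h1 : (h * g₀⁻¹) • K = M := by rw [mul_smul]; exact hhM'
              calc (xw ⟨M, hMle, hMconj⟩)⁻¹ • ((h * g₀⁻¹) • K)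
                  = (xw ⟨M, hMle, hMconj⟩)⁻¹ • (xw ⟨M, hMle, hMconj⟩ • K) := by
                    rw [h1, hx']
                _ = K := inv_smul_smul _ _
            have hnr : ((xw ⟨M, hMle, hMconj⟩)⁻¹ * (h * g₀⁻¹)) • r =
                (↑((xw ⟨M, hMle, hMconj⟩)⁻¹) : G ⧸ H) := by
              rw [← hg₀]
              show (((xw ⟨M, hMle, hMconj⟩)⁻¹ * (h * g₀⁻¹) * g₀ : G) : G ⧸ H) =
                ↑((xw ⟨M, hMle, hMconj⟩)⁻¹)
              rw [QuotientGroup.eq]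
              have e : ((xw ⟨M, hMle, hMconj⟩)⁻¹ * (h * g₀⁻¹) * g₀)⁻¹ *
                  (xw ⟨M, hMle, hMconj⟩)⁻¹ = h⁻¹ := by group
              rw [e]; exact H.inv_mem hh
            exact (hcu ⟨M, hMle, hMconj⟩ r hr ⟨_, hnN, hnr⟩).symm
          exact ⟨⟨⟨M, hMle, hMconj⟩, hcLM⟩, Subtype.ext rfl⟩
      have e1 : Nat.card {L : ST H K // c L = r} = Nat.card (orbit (↥H) (g₀⁻¹ • K)) :=
        Nat.card_congr (Equiv.ofBijective _ hbij)
      -- stabilizers correspond under conjugation by `g₀`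
      have e2 : Nat.card (MulAction.stabilizer (↥(Subgroup.normalizer (K : Set G))) r) =
          Nat.card (MulAction.stabilizer (↥H) (g₀⁻¹ • K)) := by
        apply Nat.card_congr
        refine ⟨fun n => ⟨⟨g₀⁻¹ * ↑↑n * g₀, ?_⟩, ?_⟩, fun h => ⟨⟨g₀ * ↑↑h * g₀⁻¹, ?_⟩, ?_⟩,
          ?_, ?_⟩
        · -- membership in H
          have h2 : (((↑↑n : G) * g₀ : G) : G ⧸ H) = ↑g₀ := by
            show ((↑↑n : G)) • ((g₀ : G) : G ⧸ H) = ((g₀ : G) : G ⧸ H)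
            rw [hg₀]
            exact n.2
          rw [QuotientGroup.eq] at h2
          have h3 := H.inv_mem h2
          have e : (((↑↑n : G) * g₀)⁻¹ * g₀)⁻¹ = g₀⁻¹ * ↑↑n * g₀ := by group
          rwa [e] at h3
        · -- stabilizes g₀⁻¹ • K
          show (g₀⁻¹ * ↑↑n * g₀) • (g₀⁻¹ • K) = g₀⁻¹ • K
          rw [smul_smul]
          have e : g₀⁻¹ * ↑↑n * g₀ * g₀⁻¹ = g₀⁻¹ * ↑↑n := by group
          rw [e, mul_smul, smul_normalizer_iff.mpr (↑n : ↥(Subgroup.normalizer (K : Set G))).2]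
        · -- membership in the normalizer
          rw [← smul_normalizer_iff]
          have hh : ((↑↑h : G) : G) • (g₀⁻¹ • K) = g₀⁻¹ • K := h.2
          calc (g₀ * ↑↑h * g₀⁻¹) • K = g₀ • ((↑↑h : G) • (g₀⁻¹ • K)) := by
                rw [mul_smul, mul_smul]
            _ = g₀ • (g₀⁻¹ • K) := by rw [hh]
            _ = K := smul_inv_smul g₀ K
        · -- stabilizes r
          show (g₀ * ↑↑h * g₀⁻¹ : G) • r = r
          rw [← hg₀]
          show ((g₀ * ↑↑h * g₀⁻¹ * g₀ : G) : G ⧸ H) = ↑g₀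
          rw [QuotientGroup.eq]
          have e : (g₀ * (↑↑h : G) * g₀⁻¹ * g₀)⁻¹ * g₀ = (↑↑h : G)⁻¹ := by group
          rw [e]; exact H.inv_mem (↑h : ↥H).2
        · intro n
          apply Subtype.ext; apply Subtype.ext
          show g₀ * (g₀⁻¹ * ↑↑n * g₀) * g₀⁻¹ = ↑↑n
          group
        · intro h
          apply Subtype.ext; apply Subtype.ext
          show g₀⁻¹ * (g₀ * ↑↑h * g₀⁻¹) * g₀ = ↑↑h
          group
      have e3 : Nat.card (orbit (↥H) (g₀⁻¹ • K)) *
          Nat.card (MulAction.stabilizer (↥H) (g₀⁻¹ • K)) = Nat.card ↥H := by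
        have h4 := Nat.card_congr (orbitProdStabilizerEquivGroup (↥H) (g₀⁻¹ • K))
        rwa [Nat.card_prod] at h4
      rw [e1, e2]; exact e3
    -- now the arithmetic
    have hHpos : (0:ℕ) < Nat.card ↥H := Nat.card_pos
    have hstabne : ∀ r ∈ R, Nat.card (MulAction.stabilizer (↥(Subgroup.normalizer (K : Set G))) r) ≠ 0 := by
      intro r hr h0
      have h1 := key r hr
      rw [h0, mul_zero] at h1
      omega
    have hpt : ∀ r ∈ R,
        (Nat.card ↥K : ℚ) / (Nat.card (MulAction.stabilizer (↥(Subgroup.normalizer (K : Set G))) r) : ℚ) =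
          ((Nat.card ↥K : ℚ) / (Nat.card ↥H : ℚ)) * (Nat.card {L : ST H K // c L = r} : ℚ) := by
      intro r hr
      have hcst : (Nat.card {L : ST H K // c L = r} : ℚ) *
          (Nat.card (MulAction.stabilizer (↥(Subgroup.normalizer (K : Set G))) r) : ℚ) = (Nat.card ↥H : ℚ) := by
        exact_mod_cast key r hr
      have h1 : (Nat.card (MulAction.stabilizer (↥(Subgroup.normalizer (K : Set G))) r) : ℚ) ≠ 0 := by
        exact_mod_cast hstabne r hr
      have h2 : (Nat.card ↥H : ℚ) ≠ 0 := by
        exact_mod_cast hHpos.ne'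
      rw [div_eq_iff h1, div_mul_eq_mul_div, div_mul_eq_mul_div, eq_div_iff h2]
      linear_combination (-(Nat.card ↥K : ℚ)) * hcst
    rw [Finset.sum_congr rfl hpt, ← Finset.mul_sum]
    have hfib : ∀ r : G ⧸ H, Nat.card {L : ST H K // c L = r} =
        (Finset.univ.filter (fun L : ST H K => c L = r)).card := by
      intro r
      rw [Nat.card_eq_fintype_card, Fintype.card_subtype]
    have hsum : ∑ r ∈ R, Nat.card {L : ST H K // c L = r} = Nat.card (ST H K) := by
      rw [Finset.sum_congr rfl (fun r _ => hfib r), Nat.card_eq_fintype_card]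
      have h5 := Finset.card_eq_sum_card_fiberwise
        (s := (Finset.univ : Finset (ST H K))) (t := R) (f := c) (fun L _ => hcR L)
      rw [Finset.card_univ] at h5
      exact h5.symm
    have hconv : (Nat.card {L : Subgroup G // L ≤ H ∧
        ∃ x : G, K.map (MulAut.conj x).toMonoidHom = L} : ℚ) = (Nat.card (ST H K) : ℚ) := rfl
    rw [hconv]
    congr 1
    exact_mod_cast hsum
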